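/- If T' ∈ ant(T) (i.e., T' is in the field of the anticipation equivalence ≈_T) and T'' = antOut(T', γ) is defined for a label sequence γ, then T'' ∈ extAnt(T), the field of the extended anticipation equivalence ≈̂_T. -/

import Mathlib

/-- Binary session types: output selection `⊕{lᵢ:Tᵢ}`, input branching `&{lᵢ:Tᵢ}`,
recursion `μt.T` (de Bruijn), variables, and `end`. Labels are natural numbers. -/
inductive SType : Type
  | out : List (Nat × SType) → SType
  | inp : List (Nat × SType) → SType
  | mu  : SType → SType
  | var : Nat → SType
  | done : SType

mutual
/-- The dual of a session type: swap `⊕` and `&`. -/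
def SType.dual : SType → SType
  | .out bs => .inp (dualBranches bs)
  | .inp bs => .out (dualBranches bs)
  | .mu t => .mu t.dual
  | .var n => .var n
  | .done => .done
def dualBranches : List (Nat × SType) → List (Nat × SType)
  | [] => []
  | (l, t) :: rest => (l, t.dual) :: dualBranches rest
end

mutual
/-- Substitution of `s` for the variable of de Bruijn index `k`. -/
def SType.subst (s : SType) : Nat → SType → SType
  | k, .out bs => .out (substBranches s k bs)
  | k, .inp bs => .inp (substBranches s k bs)
  | k, .mu t => .mu (SType.subst s (k+1) t)
  | k, .var n => if n = k then s else .var n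
  | _, .done => .done
def substBranches (s : SType) : Nat → List (Nat × SType) → List (Nat × SType)
  | _, [] => []
  | k, (l, t) :: rest => (l, SType.subst s k t) :: substBranches s k rest
end

mutual
/-- One-step unfolding of a session type. -/
def SType.unfold1 : SType → SType
  | .out bs => .out (unfold1Branches bs)
  | .inp bs => .inp (unfold1Branches bs)
  | .mu t => SType.subst (.mu t) 0 t
  | .var n => .var n
  | .done => .done
def unfold1Branches : List (Nat × SType) → List (Nat × SType)
  | [] => []
  | (l, t) :: rest => (l, t.unfold1) :: unfold1Branches rest
end

/-- `n`-fold unfolding. -/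
def SType.unfoldN : Nat → SType → SType
  | 0, t => t
  | n+1, t => (SType.unfoldN n t).unfold1

/-- A session type is single-out if every output selection has exactly one choice. -/
inductive SingleOut : SType → Prop
  | out {l t} : SingleOut t → SingleOut (.out [(l, t)])
  | inp {bs} : (∀ p ∈ bs, SingleOut p.2) → SingleOut (.inp bs)
  | mu {t} : SingleOut t → SingleOut (.mu t)
  | var {n} : SingleOut (.var n)
  | done : SingleOut .done

/-- A session type is single-in if every input branching has exactly one choice. -/
inductive SingleIn : SType → Prop
  | out {bs} : (∀ p ∈ bs, SingleIn p.2) → SingleIn (.out bs)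
  | inp {l t} : SingleIn t → SingleIn (.inp [(l, t)])
  | mu {t} : SingleIn t → SingleIn (.mu t)
  | var {n} : SingleIn (.var n)
  | done : SingleIn .done
inductive ICtx : Type
  | hole : Nat → ICtx
  | inp : List (Nat × ICtx) → ICtx

mutual
/-- Fill each hole `n` of the input context with `f n`. -/
def ICtx.fill : ICtx → (Nat → SType) → SType
  | .hole n, f => f n
  | .inp bs, f => .inp (fillBranches bs f)
def fillBranches : List (Nat × ICtx) → (Nat → SType) → List (Nat × SType)
  | [], _ => []
  | (l, A) :: rest, f => (l, A.fill f) :: fillBranches rest f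
end

mutual
/-- The list of hole indices occurring in an input context. -/
def ICtx.holes : ICtx → List Nat
  | .hole n => [n]
  | .inp bs => holesBranches bs
def holesBranches : List (Nat × ICtx) → List Nat
  | [] => []
  | (_, A) :: rest => A.holes ++ holesBranches rest
end

/-- Well-formed input context: holes are exactly `1..m` for some `m ≥ 1`,
each occurring exactly once. -/
def ICtx.WF (A : ICtx) : Prop :=
  ∃ m : Nat, 1 ≤ m ∧ A.holes.Perm (List.range' 1 m)

/-- `ClosedAt k T`: all free variables of `T` have index `< k`. -/
inductive ClosedAt : Nat → SType → Prop
  | out {k bs} : (∀ p ∈ bs, ClosedAt k p.2) → ClosedAt k (.out bs)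
  | inp {k bs} : (∀ p ∈ bs, ClosedAt k p.2) → ClosedAt k (.inp bs)
  | mu {k t} : ClosedAt (k+1) t → ClosedAt k (.mu t)
  | var {k n} : n < k → ClosedAt k (.var n)
  | done {k} : ClosedAt k .done

/-- A closed session type. -/
def SClosed (T : SType) : Prop := ClosedAt 0 T

/-- The variables occurring unguarded (i.e. not under an input or output) in `T`. -/
def SType.unguarded : SType → List Nat
  | .var n => [n]
  | .mu t => t.unguarded.filterMap (fun n => match n with | 0 => none | m+1 => some m)
  | _ => []

/-- Guardedness: in each `μt.T`, the variable `t` occurs only under an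
input or output. -/
inductive SGuarded : SType → Prop
  | out {bs} : (∀ p ∈ bs, SGuarded p.2) → SGuarded (.out bs)
  | inp {bs} : (∀ p ∈ bs, SGuarded p.2) → SGuarded (.inp bs)
  | mu {t} : 0 ∉ t.unguarded → SGuarded t → SGuarded (.mu t)
  | var {n} : SGuarded (.var n)
  | done : SGuarded .done

/-- `reach T`: the minimal set containing `T` and closed under consuming an
input branching, top-level unfolding of recursion, and consuming a single
output. -/
inductive Reach (T : SType) : SType → Prop
  | refl : Reach T T
  | inp {bs l t} : Reach T (.inp bs) → (l, t) ∈ bs → Reach T t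
  | mu {t} : Reach T (.mu t) → Reach T (SType.subst (.mu t) 0 t)
  | out {l t} : Reach T (.out [(l, t)]) → Reach T t

/-- `OutUnf T T'`: `T'` is the output unfolding `outUnf(T)` of `T`
(a partial operation, given relationally): recursion is unfolded in each
branch just enough to expose the first output selection. -/
inductive OutUnf : SType → SType → Prop
  | out {bs} : OutUnf (.out bs) (.out bs)
  | inp {bs bs' : List (Nat × SType)} :
      bs.length = bs'.length →
      (∀ (i : Nat) (h1 : i < bs.length) (h2 : i < bs'.length),
        (bs.get ⟨i, h1⟩).1 = (bs'.get ⟨i, h2⟩).1) →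
      (∀ (i : Nat) (h1 : i < bs.length) (h2 : i < bs'.length),
        OutUnf (bs.get ⟨i, h1⟩).2 (bs'.get ⟨i, h2⟩).2) →
      OutUnf (.inp bs) (.inp bs')
  | mu {t t'} : OutUnf (SType.subst (.mu t) 0 t) t' → OutUnf (.mu t) t'

/-- `R` is an `≈_T` relation: related types are in `reach T` and can, after
output unfolding, anticipate a common output label, with all pairs of
continuations again related. -/
def IsAntEqRel (T : SType) (R : SType → SType → Prop) : Prop :=
  (∀ a b, R a b → Reach T a ∧ Reach T b) ∧
  ∀ a b, R a b → ∃ (l : Nat) (A A' : ICtx) (f g : Nat → SType),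
    A.WF ∧ A'.WF ∧
    OutUnf a (A.fill (fun k => .out [(l, f k)])) ∧
    OutUnf b (A'.fill (fun k => .out [(l, g k)])) ∧
    (∀ i ∈ A.holes, ∀ j ∈ A'.holes, R (f i) (g j))

/-- `a ≈_T b`: `a` and `b` can anticipate the same infinite output sequence. -/
def AntEq (T a b : SType) : Prop := ∃ R, IsAntEqRel T R ∧ R a b

/-- `ant T`: the field of `≈_T`. -/
def AntField (T a : SType) : Prop := ∃ b, AntEq T a b ∨ AntEq T b a

/-- Output anticipation along a sequence of labels (relational presentation of
the partial function `antOut`). -/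
inductive AntOut : SType → List Nat → SType → Prop
  | nil (T : SType) : AntOut T [] T
  | snoc {T : SType} {σ : List Nat} {U : SType} {l : Nat} {A : ICtx} {f : Nat → SType} :
      AntOut T σ U → A.WF →
      OutUnf U (A.fill (fun k => .out [(l, f k)])) →
      AntOut T (σ ++ [l]) (A.fill f)

/-- `T` can infinitely anticipate outputs: there is an infinite label sequence
all of whose finite prefixes can be anticipated. -/
def AntOutInf (T : SType) : Prop :=
  ∃ s : Nat → Nat, ∀ n : Nat, ∃ U, AntOut T ((List.range n).map s) U

/-- `Leaf T u`: `u` belongs to the leaf set of `T`, i.e. `u` is not an input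
branching and is reachable from the root of `T` through inputs only. -/
inductive Leaf : SType → SType → Prop
  | self {t} : (∀ bs, t ≠ .inp bs) → Leaf t t
  | inp {bs l t u} : (l, t) ∈ bs → Leaf t u → Leaf (.inp bs) u

/-- The extended anticipation relation `a ≈̂_T b`. -/
def ExtAntEq (T a b : SType) : Prop :=
  ∃ (l : Nat) (A A' : ICtx) (f g : Nat → SType),
    A.WF ∧ A'.WF ∧
    OutUnf a (A.fill (fun k => .out [(l, f k)])) ∧
    OutUnf b (A'.fill (fun k => .out [(l, g k)])) ∧
    (∀ i ∈ A.holes, ∀ j ∈ A'.holes, AntEq T (f i) (g j))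

/-- `extAnt T`: the field of `≈̂_T`. -/
def ExtAntField (T a : SType) : Prop := ∃ b, ExtAntEq T a b ∨ ExtAntEq T b a

/-!
Along `antOut` the type keeps the shape `A[Tᵢ]ⁱ` with all `Tᵢ` related to one common type `c`
by a single `≈_T` witness relation `R`. Output-unfolding `c` fixes a label `l` and continuations
`q j`; since `outUnf` is deterministic, every `Tᵢ` anticipates that same `l`, with continuations
`R`-related to all `q j`. Hence `outUnf (A[Tᵢ]ⁱ)` is an input context whose leaves are `⊕{l : t}`
with `t R q j`. A further `antOut` step therefore stays in the invariant (with `q j` as the common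
partner), and at the end, read as one well-formed context, it witnesses `≈̂_T` against `c`.
-/

theorem ICtx.fill_inp (bs : List (ℕ × ICtx)) (f : ℕ → SType) :
    (ICtx.inp bs).fill f = .inp (bs.map fun p => (p.1, p.2.fill f)) := by
  rw [ICtx.fill]
  congr 1
  induction bs with
  | nil => rfl
  | cons p bs ih => rw [fillBranches, ih]; rfl

theorem ICtx.mem_holes_inp {i : ℕ} {bs : List (ℕ × ICtx)} :
    i ∈ (ICtx.inp bs).holes ↔ ∃ p ∈ bs, i ∈ p.2.holes := by
  rw [ICtx.holes]
  induction bs with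
  | nil => simp [holesBranches]
  | cons p bs ih => simp [holesBranches, ih]

@[elab_as_elim]
theorem ICtx.induction_mem {motive : ICtx → Prop} (hole : ∀ n, motive (.hole n))
    (inp : ∀ bs, (∀ p ∈ bs, motive p.2) → motive (.inp bs)) (A : ICtx) : motive A :=
  ICtx.rec (motive_2 := fun bs => ∀ p ∈ bs, motive p.2) (motive_3 := fun p => motive p.2)
    hole inp (by simp) (fun _ _ hp hbs => List.forall_mem_cons.2 ⟨hp, hbs⟩) (fun _ _ h => h) A

@[elab_as_elim]
theorem SType.induction_inp {motive : SType → Prop}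
    (inp : ∀ bs, (∀ p ∈ bs, motive p.2) → motive (.inp bs))
    (other : ∀ t, (∀ bs, t ≠ .inp bs) → motive t) (t : SType) : motive t :=
  SType.rec (motive_2 := fun bs => ∀ p ∈ bs, motive p.2) (motive_3 := fun p => motive p.2)
    (fun _ _ => other _ nofun) inp (fun _ _ => other _ nofun) (fun _ => other _ nofun)
    (other _ nofun) (by simp) (fun _ _ hp hbs => List.forall_mem_cons.2 ⟨hp, hbs⟩)
    (fun _ _ h => h) t

theorem ICtx.fill_congr {A : ICtx} {f g : ℕ → SType} (h : ∀ i ∈ A.holes, f i = g i) :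
    A.fill f = A.fill g := by
  induction A using ICtx.induction_mem with
  | hole n => exact h n (by simp [ICtx.holes])
  | inp bs ih =>
    rw [fill_inp, fill_inp]
    congr 1
    refine List.map_congr_left fun p hp => ?_
    rw [ih p hp fun i hi => h i (mem_holes_inp.2 ⟨p, hp, hi⟩)]

theorem ICtx.WF.exists_mem_holes {A : ICtx} (hA : A.WF) : ∃ i, i ∈ A.holes := by
  obtain ⟨m, hm, hperm⟩ := hA
  exact ⟨1, hperm.mem_iff.2 (List.mem_range'_1.2 ⟨le_rfl, by omega⟩)⟩

theorem leaf_inp {bs : List (ℕ × SType)} {u : SType} :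
    Leaf (.inp bs) u ↔ ∃ p ∈ bs, Leaf p.2 u := by
  constructor
  · rintro (⟨hne⟩ | ⟨hmem, hu⟩)
    · exact absurd rfl (hne bs)
    · exact ⟨_, hmem, hu⟩
  · rintro ⟨p, hp, hu⟩
    exact Leaf.inp (l := p.1) hp hu

theorem leaf_out {bs : List (ℕ × SType)} {u : SType} : Leaf (.out bs) u ↔ u = .out bs := by
  constructor
  · rintro ⟨⟩
    rfl
  · rintro rfl
    exact Leaf.self nofun

theorem leaf_fill {A : ICtx} {g : ℕ → SType} {u : SType} :
    Leaf (A.fill g) u ↔ ∃ i ∈ A.holes, Leaf (g i) u := by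
  induction A using ICtx.induction_mem with
  | hole n => simp [ICtx.fill, ICtx.holes]
  | inp bs ih =>
    simp only [ICtx.fill_inp, leaf_inp, List.mem_map, ICtx.mem_holes_inp]
    constructor
    · rintro ⟨_, ⟨p, hp, rfl⟩, hu⟩
      obtain ⟨i, hi, hgi⟩ := (ih p hp).1 hu
      exact ⟨i, ⟨p, hp, hi⟩, hgi⟩
    · rintro ⟨i, ⟨p, hp, hi⟩, hgi⟩
      exact ⟨_, ⟨p, hp, rfl⟩, (ih p hp).2 ⟨i, hi, hgi⟩⟩

theorem leaf_fill_out {A : ICtx} {l : ℕ} {f : ℕ → SType} {u : SType} :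
    Leaf (A.fill fun k => .out [(l, f k)]) u ↔ ∃ k ∈ A.holes, u = .out [(l, f k)] := by
  simp only [leaf_fill, leaf_out]

theorem ICtx.exists_hole_of_fill_out_eq {A B : ICtx} {l l' : ℕ} {f g : ℕ → SType}
    (h : (A.fill fun k => .out [(l, f k)]) = B.fill fun k => .out [(l', g k)]) :
    ∀ i ∈ A.holes, l = l' ∧ ∃ j ∈ B.holes, f i = g j := by
  intro i hi
  have hleaf : Leaf (B.fill fun k => .out [(l', g k)]) (.out [(l, f i)]) :=
    h ▸ leaf_fill_out.2 ⟨i, hi, rfl⟩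
  obtain ⟨j, hj, hij⟩ := leaf_fill_out.1 hleaf
  simp only [SType.out.injEq, List.cons.injEq, Prod.mk.injEq, and_true] at hij
  exact ⟨hij.1, j, hj, hij.2⟩

theorem OutUnf.det {a b c : SType} (hb : OutUnf a b) (hc : OutUnf a c) : b = c := by
  induction hb generalizing c with
  | out => cases hc; rfl
  | @inp bs bs' hlen hlab _ ih =>
    cases hc with
    | inp hlen' hlab' hunf' =>
      congr 1
      refine List.ext_get (by omega) fun i h₁ h₂ => ?_
      have hi : i < bs.length := by omega
      exact Prod.ext ((hlab i hi h₁).symm.trans (hlab' i hi h₂)) (ih i hi h₁ (hunf' i hi h₂))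
  | mu _ ih =>
    cases hc with
    | mu h => exact ih h

theorem OutUnf.fill {A : ICtx} {f g : ℕ → SType} (h : ∀ i ∈ A.holes, OutUnf (f i) (g i)) :
    OutUnf (A.fill f) (A.fill g) := by
  induction A using ICtx.induction_mem with
  | hole n => exact h n (by simp [ICtx.holes])
  | inp bs ih =>
    rw [ICtx.fill_inp, ICtx.fill_inp]
    refine OutUnf.inp (by simp) (fun i _ _ => by simp) fun i h₁ _ => ?_
    have hi : i < bs.length := by simpa using h₁
    simpa using ih bs[i] (List.getElem_mem hi)
      fun j hj => h j (ICtx.mem_holes_inp.2 ⟨bs[i], List.getElem_mem hi, hj⟩)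

/-- Leaf-wise description of `W = A[⊕{l : f k}]ᵏ` with `A.WF` and `P (f k)` for all holes `k`
(see `LeavesOut.exists_fill_out`). -/
def LeavesOut (l : ℕ) (P : SType → Prop) (W : SType) : Prop :=
  (∃ u, Leaf W u) ∧ ∀ u, Leaf W u → ∃ t, u = .out [(l, t)] ∧ P t

section LeavesOut

variable {l : ℕ} {P : SType → Prop}

theorem leavesOut_fill_out {A : ICtx} {f : ℕ → SType} (hA : A.WF)
    (hf : ∀ k ∈ A.holes, P (f k)) : LeavesOut l P (A.fill fun k => .out [(l, f k)]) := by
  obtain ⟨k, hk⟩ := hA.exists_mem_holes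
  refine ⟨⟨_, leaf_fill_out.2 ⟨k, hk, rfl⟩⟩, fun u hu => ?_⟩
  obtain ⟨k, hk, rfl⟩ := leaf_fill_out.1 hu
  exact ⟨f k, rfl, hf k hk⟩

theorem LeavesOut.forall_of_fill_out {A : ICtx} {l' : ℕ} {f : ℕ → SType}
    (h : LeavesOut l P (A.fill fun k => .out [(l', f k)])) : ∀ k ∈ A.holes, P (f k) := by
  intro k hk
  obtain ⟨t, ht, hPt⟩ := h.2 _ (leaf_fill_out.2 ⟨k, hk, rfl⟩)
  simp only [SType.out.injEq, List.cons.injEq, Prod.mk.injEq, and_true] at ht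
  exact ht.2 ▸ hPt

theorem LeavesOut.fill {A : ICtx} {g : ℕ → SType} (hA : A.WF)
    (h : ∀ i ∈ A.holes, LeavesOut l P (g i)) : LeavesOut l P (A.fill g) := by
  obtain ⟨i, hi⟩ := hA.exists_mem_holes
  obtain ⟨u, hu⟩ := (h i hi).1
  refine ⟨⟨u, leaf_fill.2 ⟨i, hi, hu⟩⟩, fun u hu => ?_⟩
  obtain ⟨i, hi, hu⟩ := leaf_fill.1 hu
  exact (h i hi).2 u hu

/- Holes are numbered from an arbitrary start `s`, so that the contexts of consecutive branches
can be numbered one after the other without renaming. -/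
theorem exists_fill_out_inp {bs : List (ℕ × SType)}
    (h : ∀ p ∈ bs, ∀ s, ∃ (A : ICtx) (m : ℕ) (f : ℕ → SType), A.holes = List.range' s m ∧
      p.2 = A.fill (fun k => .out [(l, f k)]) ∧ ∀ k ∈ A.holes, P (f k)) (s : ℕ) :
    ∃ (cs : List (ℕ × ICtx)) (m : ℕ) (f : ℕ → SType), (ICtx.inp cs).holes = List.range' s m ∧
      SType.inp bs = (ICtx.inp cs).fill (fun k => .out [(l, f k)]) ∧
      ∀ k ∈ (ICtx.inp cs).holes, P (f k) := by
  induction bs generalizing s with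
  | nil => exact ⟨[], 0, fun _ => .done, rfl, rfl, by simp [ICtx.holes, holesBranches]⟩
  | cons b bs ih =>
    obtain ⟨A, m₁, f₁, hA, hb, hP₁⟩ := h b (by simp) s
    obtain ⟨cs, m₂, f₂, hcs, hbs, hP₂⟩ := ih (fun p hp => h p (by simp [hp])) (s + m₁)
    have hholes : (ICtx.inp ((b.1, A) :: cs)).holes = A.holes ++ (ICtx.inp cs).holes := rfl
    have hA' : ∀ k ∈ A.holes, k < s + m₁ := fun k hk => by
      rw [hA, List.mem_range'_1] at hk
      omega
    have hcs' : ∀ k ∈ (ICtx.inp cs).holes, ¬k < s + m₁ := fun k hk => by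
      rw [hcs, List.mem_range'_1] at hk
      omega
    refine ⟨(b.1, A) :: cs, m₁ + m₂, fun k => if k < s + m₁ then f₁ k else f₂ k, ?_, ?_, ?_⟩
    · rw [hholes, hA, hcs, List.range'_append_1]
    · have e₁ : b.2 = A.fill fun k => .out [(l, if k < s + m₁ then f₁ k else f₂ k)] :=
        hb.trans (ICtx.fill_congr fun k hk => by simp [hA' k hk])
      have e₂ : SType.inp bs =
          (ICtx.inp cs).fill fun k => .out [(l, if k < s + m₁ then f₁ k else f₂ k)] :=
        hbs.trans (ICtx.fill_congr fun k hk => by simp [hcs' k hk])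
      rw [ICtx.fill, SType.inp.injEq] at e₂
      rw [ICtx.fill, fillBranches, ← e₁, ← e₂]
    · intro k hk
      rcases List.mem_append.1 (hholes ▸ hk) with hk | hk
      · simpa [hA' k hk] using hP₁ k hk
      · simpa [hcs' k hk] using hP₂ k hk

theorem exists_fill_out_of_leaves (V : SType)
    (hV : ∀ u, Leaf V u → ∃ t, u = .out [(l, t)] ∧ P t) (s : ℕ) :
    ∃ (A : ICtx) (m : ℕ) (f : ℕ → SType), A.holes = List.range' s m ∧
      V = A.fill (fun k => .out [(l, f k)]) ∧ ∀ k ∈ A.holes, P (f k) := by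
  induction V using SType.induction_inp generalizing s with
  | inp bs ih =>
    obtain ⟨cs, m, f, h⟩ :=
      exists_fill_out_inp (fun p hp => ih p hp fun u hu => hV u (leaf_inp.2 ⟨p, hp, hu⟩)) s
    exact ⟨.inp cs, m, f, h⟩
  | other t ht =>
    obtain ⟨t', rfl, hP⟩ := hV t (Leaf.self ht)
    exact ⟨.hole s, 1, fun _ => t', by simp [ICtx.holes], rfl, by simp [ICtx.holes, hP]⟩

theorem LeavesOut.exists_fill_out {W : SType} (h : LeavesOut l P W) :
    ∃ (A : ICtx) (f : ℕ → SType), A.WF ∧ W = A.fill (fun k => .out [(l, f k)]) ∧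
      ∀ k ∈ A.holes, P (f k) := by
  obtain ⟨A, m, f, hA, rfl, hP⟩ := exists_fill_out_of_leaves W h.2 1
  obtain ⟨u, hu⟩ := h.1
  obtain ⟨k, hk, -⟩ := leaf_fill.1 hu
  rw [hA, List.mem_range'_1] at hk
  exact ⟨A, f, ⟨m, by omega, hA ▸ List.Perm.refl _⟩, rfl, hP⟩

end LeavesOut

theorem AntEq.symm {T a b : SType} (h : AntEq T a b) : AntEq T b a := by
  obtain ⟨R, ⟨hreach, hant⟩, hab⟩ := h
  refine ⟨flip R, ⟨fun x y hxy => (hreach y x hxy).symm, fun x y hxy => ?_⟩, hab⟩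
  obtain ⟨l, A, A', f, g, hA, hA', hy, hx, hfg⟩ := hant y x hxy
  exact ⟨l, A', A, g, f, hA', hA, hx, hy, fun j hj i hi => hfg i hi j hj⟩

theorem IsAntEqRel.leavesOut_of_outUnf {T a c : SType} {R : SType → SType → Prop} {B : ICtx}
    {l : ℕ} {q : ℕ → SType} (hR : IsAntEqRel T R) (hac : R a c) (hB : B.WF)
    (hc : OutUnf c (B.fill fun k => .out [(l, q k)])) :
    ∃ W, OutUnf a W ∧ LeavesOut l (fun t => ∀ j ∈ B.holes, R t (q j)) W := by
  obtain ⟨l', A, B', f, g, hA, -, ha, hc', hfg⟩ := hR.2 a c hac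
  have hlabel := ICtx.exists_hole_of_fill_out_eq (hc.det hc')
  obtain ⟨j₀, hj₀⟩ := hB.exists_mem_holes
  obtain ⟨rfl, -⟩ := hlabel j₀ hj₀
  refine ⟨_, ha, leavesOut_fill_out hA fun i hi j hj => ?_⟩
  obtain ⟨-, j', hj', hq⟩ := hlabel j hj
  exact hq ▸ hfg i hi j' hj'

def AntFill (T U : SType) : Prop :=
  ∃ R, IsAntEqRel T R ∧ ∃ (c : SType) (A : ICtx) (f : ℕ → SType),
    A.WF ∧ U = A.fill f ∧ ∀ i ∈ A.holes, R (f i) c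

theorem AntField.antFill {T a : SType} (h : AntField T a) : AntFill T a := by
  obtain ⟨b, R, hR, hab⟩ : ∃ b, AntEq T a b := by
    obtain ⟨b, hab | hba⟩ := h
    exacts [⟨b, hab⟩, ⟨b, hba.symm⟩]
  exact ⟨R, hR, b, .hole 1, fun _ => a, ⟨1, le_rfl, .refl _⟩, rfl, fun _ _ => hab⟩

namespace AntFill

variable {T U : SType}

theorem exists_leavesOut (h : AntFill T U) :
    ∃ R, IsAntEqRel T R ∧ ∃ (c : SType) (l : ℕ) (B : ICtx) (q : ℕ → SType),
      B.WF ∧ OutUnf c (B.fill fun k => .out [(l, q k)]) ∧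
      ∃ W, OutUnf U W ∧ LeavesOut l (fun t => ∀ j ∈ B.holes, R t (q j)) W := by
  obtain ⟨R, hR, c, A, f, hA, rfl, hfc⟩ := h
  obtain ⟨i₀, hi₀⟩ := hA.exists_mem_holes
  obtain ⟨l, -, B, -, q, -, hB, -, hc, -⟩ := hR.2 _ _ (hfc i₀ hi₀)
  have : Nonempty SType := ⟨.done⟩
  choose! g hg using fun i hi => hR.leavesOut_of_outUnf (hfc i hi) hB hc
  exact ⟨R, hR, c, l, B, q, hB, hc, A.fill g, OutUnf.fill fun i hi => (hg i hi).1,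
    LeavesOut.fill hA fun i hi => (hg i hi).2⟩

theorem of_outUnf {A : ICtx} {l : ℕ} {f : ℕ → SType} (h : AntFill T U) (hA : A.WF)
    (hU : OutUnf U (A.fill fun k => .out [(l, f k)])) : AntFill T (A.fill f) := by
  obtain ⟨R, hR, c, l', B, q, hB, -, W, hW, hleaves⟩ := h.exists_leavesOut
  obtain ⟨j, hj⟩ := hB.exists_mem_holes
  rw [← hU.det hW] at hleaves
  exact ⟨R, hR, q j, A, f, hA, rfl, fun k hk => hleaves.forall_of_fill_out k hk j hj⟩

theorem extAntField (h : AntFill T U) : ExtAntField T U := by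
  obtain ⟨R, hR, c, l, B, q, hB, hc, W, hW, hleaves⟩ := h.exists_leavesOut
  obtain ⟨A, f, hA, rfl, hfq⟩ := hleaves.exists_fill_out
  exact ⟨c, .inl ⟨l, A, B, f, q, hA, hB, hW, hc, fun i hi j hj => ⟨R, hR, hfq i hi j hj⟩⟩⟩

end AntFill

/-- if `T' ∈ ant T` and `T'' = antOut T' γ` is defined for a
label sequence `γ`, then `T'' ∈ extAnt T`. -/
theorem antOut_mem_extAntField (T T' T'' : SType) (γ : List Nat)
    (hso : SingleOut T) (h1 : AntField T T') (h2 : AntOut T' γ T'') :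
    ExtAntField T T'' := by
  suffices AntFill T T'' from this.extAntField
  induction h2 with
  | nil => exact h1.antFill
  | snoc _ hA hU ih => exact ih.of_outUnf hA hU
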